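/- Let (J_m)_{m≥1} be an α-kernel with J̄ = Σ_{m=1}^∞ J_m, and let (q_n) be the onsite sequence defined by the recursion q₀ = √(w + 2εJ̄), q_n = ε(J_n q₀ + Σ_{m=1}^{n−1} (J_{n−m} + J_{n+m}) q_m)/(ε(2J̄ − J_{2n}) + w) for n ≥ 1, where ρ = ε/w. Then for each n ≥ 1 there exists a real sequence (c_{n,k})_{k≥1} with c_{n,1} = J_n such that for every ρ with 0 < ρ < 1/(2J̄): Σ_{k=1}^∞ |c_{n,k}| ρ^k < ∞ and q_n/q₀ = Σ_{k=1}^∞ c_{n,k} ρ^k. -/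

import Mathlib

open scoped BigOperators

noncomputable section

/-- An α-kernel: a nonnegative sequence `(J_m)_{m ≥ 1}` (the value `J 0` is irrelevant),
not identically zero, with `m^{1+α} J_m → A ∈ (0,∞)`, and with finite total mass. -/
def IsAlphaKernel (α : ℝ) (J : ℕ → ℝ) : Prop :=
  (∀ m : ℕ, 1 ≤ m → 0 ≤ J m) ∧
  (∃ m : ℕ, 1 ≤ m ∧ J m ≠ 0) ∧
  (∃ A : ℝ, 0 < A ∧
    Filter.Tendsto (fun m : ℕ => ((m : ℝ)) ^ (1 + α) * J m) Filter.atTop (nhds A)) ∧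
  Summable (fun m : ℕ => J (m + 1))

/-- `J̄ = Σ_{m=1}^∞ J_m`. -/
def Jbar (J : ℕ → ℝ) : ℝ := ∑' m : ℕ, J (m + 1)

/-- The onsite recursion: `q₀ = √(w + 2εJ̄)` and, for `n ≥ 1`,
`q_n = ε(J_n q₀ + Σ_{m=1}^{n−1} (J_{n−m} + J_{n+m}) q_m)/(ε(2J̄ − J_{2n}) + w)`. -/
def OnsiteRec (J : ℕ → ℝ) (w ε : ℝ) (q : ℕ → ℝ) : Prop :=
  q 0 = Real.sqrt (w + 2 * ε * Jbar J) ∧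
  ∀ n : ℕ, 1 ≤ n →
    q n = ε * (J n * q 0 + ∑ m ∈ Finset.Ico 1 n, (J (n - m) + J (n + m)) * q m)
      / (ε * (2 * Jbar J - J (2 * n)) + w)

/-- The offsite recursion: `g₁ = g₀ = √(w + ε(2J̄ − J₁))` and, for `n ≥ 2`,
`g_n = ε Σ_{m=1}^{n−1} (J_{n−m} + J_{n+m−1}) g_m/(ε(2J̄ − J_{2n−1}) + w)`. -/
def OffsiteRec (J : ℕ → ℝ) (w ε : ℝ) (g : ℕ → ℝ) : Prop :=
  g 0 = Real.sqrt (w + ε * (2 * Jbar J - J 1)) ∧ g 1 = g 0 ∧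
  ∀ n : ℕ, 2 ≤ n →
    g n = ε * (∑ m ∈ Finset.Ico 1 n, (J (n - m) + J (n + m - 1)) * g m)
      / (ε * (2 * Jbar J - J (2 * n - 1)) + w)


noncomputable def acoef (J : ℕ → ℝ) : ℕ → ℕ → ℝ
  | n => fun k =>
    if k = 0 then 0 else
      ∑ j ∈ Finset.range k,
        ((if k - 1 - j = 0 then J n else 0)
          + ∑ m ∈ (Finset.Ico 1 n).attach,
              (J (n - m.1) + J (n + m.1)) * acoef J m.1 (k - 1 - j))
        * (-(2 * Jbar J - J (2 * n))) ^ j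
  termination_by n => n
  decreasing_by exact (Finset.mem_Ico.mp m.2).2

lemma acoef_eq (J : ℕ → ℝ) (n k : ℕ) :
    acoef J n k =
      if k = 0 then 0 else
      ∑ j ∈ Finset.range k,
        ((if k - 1 - j = 0 then J n else 0)
          + ∑ m ∈ Finset.Ico 1 n,
              (J (n - m) + J (n + m)) * acoef J m (k - 1 - j))
        * (-(2 * Jbar J - J (2 * n))) ^ j := by
  rw [acoef]; dsimp only
  split_ifs with h
  · rfl
  · refine Finset.sum_congr rfl fun j _ => ?_
    rw [Finset.sum_attach (Finset.Ico 1 n) (fun m => (J (n - m) + J (n + m)) * acoef J m (k - 1 - j))]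

lemma acoef_zero (J : ℕ → ℝ) (n : ℕ) : acoef J n 0 = 0 := by rw [acoef_eq]; simp

lemma acoef_one (J : ℕ → ℝ) (n : ℕ) : acoef J n 1 = J n := by
  rw [acoef_eq]; simp [acoef_zero]

lemma main_onsite (J : ℕ → ℝ) (hnn : ∀ m, 1 ≤ m → 0 ≤ J m)
    (hsum : Summable fun m => J (m + 1)) :
    ∀ n, 1 ≤ n → ∀ w ε : ℝ, 0 < w → 0 < ε → 2 * Jbar J * (ε / w) < 1 →
      ∀ q : ℕ → ℝ, OnsiteRec J w ε q →
        Summable (fun k => |acoef J n k| * (ε / w) ^ k) ∧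
        q n / q 0 = ∑' k, acoef J n k * (ε / w) ^ k := by
  intro n
  induction n using Nat.strong_induction_on with
  | _ n IH =>
  intro hn w ε hw hε hρ1 q hq
  set ρ := ε / w with hρdef
  have hρ0 : 0 < ρ := div_pos hε hw
  have hJb0 : 0 ≤ Jbar J := tsum_nonneg fun m => hnn (m + 1) (Nat.succ_le_succ (Nat.zero_le m))
  have hJle : ∀ m, 1 ≤ m → J m ≤ Jbar J := by
    intro m hm
    have h := hsum.le_tsum (m - 1) (fun i _ => hnn (i + 1) (Nat.succ_le_succ (Nat.zero_le i)))
    rwa [Nat.sub_add_cancel hm] at h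
  set b := 2 * Jbar J - J (2 * n) with hbdef
  have hb0 : 0 ≤ b := by
    have := hJle (2 * n) (by omega); simp only [hbdef]; linarith
  have hb2 : b ≤ 2 * Jbar J := by
    have := hnn (2 * n) (by omega); simp only [hbdef]; linarith
  set x := -(b * ρ) with hxdef
  have hx : |x| < 1 := by
    rw [hxdef, abs_neg, abs_of_nonneg (mul_nonneg hb0 hρ0.le)]
    calc b * ρ ≤ 2 * Jbar J * ρ := mul_le_mul_of_nonneg_right hb2 hρ0.le
      _ < 1 := hρ1
  have hgs : Summable fun j : ℕ => ‖x ^ j‖ := by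
    simp only [norm_pow, Real.norm_eq_abs]
    exact summable_geometric_of_lt_one (abs_nonneg x) hx
  set S : ℕ → ℝ := fun i =>
    (if i = 0 then J n else 0)
      + ∑ m ∈ Finset.Ico 1 n, (J (n - m) + J (n + m)) * acoef J m i with hSdef
  set F : ℕ → ℝ := fun i => S i * ρ ^ i with hFdef
  have ha0 : ∀ m ∈ Finset.Ico 1 n, 0 ≤ J (n - m) + J (n + m) := by
    intro m hm
    rw [Finset.mem_Ico] at hm
    exact add_nonneg (hnn _ (by omega)) (hnn _ (by omega))
  have IHm : ∀ m ∈ Finset.Ico 1 n,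
      Summable (fun k => |acoef J m k| * ρ ^ k) ∧
      q m / q 0 = ∑' k, acoef J m k * ρ ^ k := by
    intro m hm
    rw [Finset.mem_Ico] at hm
    exact IH m hm.2 hm.1 w ε hw hε hρ1 q hq
  have habs : ∀ m ∈ Finset.Ico 1 n, Summable (fun i => |acoef J m i * ρ ^ i|) := by
    intro m hm
    have := (IHm m hm).1
    simpa [abs_mul, abs_of_nonneg (pow_nonneg hρ0.le _)] using this
  have hind : Summable (fun i : ℕ => if i = 0 then |J n| else 0) :=
    summable_of_ne_finset_zero (s := {0}) (by intro i hi; simp at hi; simp [hi])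
  have hind' : Summable (fun i : ℕ => if i = 0 then J n else 0) :=
    summable_of_ne_finset_zero (s := {0}) (by intro i hi; simp at hi; simp [hi])
  have hFnorm : Summable fun i => ‖F i‖ := by
    have hG : Summable fun i =>
        (if i = 0 then |J n| else 0)
          + ∑ m ∈ Finset.Ico 1 n, (J (n - m) + J (n + m)) * (|acoef J m i| * ρ ^ i) := by
      refine Summable.add hind ?_
      exact summable_sum fun m hm => ((IHm m hm).1).mul_left _
    refine Summable.of_nonneg_of_le (fun i => norm_nonneg _) (fun i => ?_) hG
    rw [Real.norm_eq_abs, hFdef]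
    simp only
    rw [abs_mul, abs_pow, abs_of_nonneg hρ0.le]
    have h1 : |S i| ≤ (if i = 0 then |J n| else 0)
        + ∑ m ∈ Finset.Ico 1 n, (J (n - m) + J (n + m)) * |acoef J m i| := by
      refine (abs_add_le _ _).trans (add_le_add ?_ ?_)
      · split_ifs <;> simp
      · refine (Finset.abs_sum_le_sum_abs _ _).trans ?_
        refine Finset.sum_le_sum fun m hm => ?_
        rw [abs_mul, abs_of_nonneg (ha0 m hm)]
    calc |S i| * ρ ^ i
        ≤ ((if i = 0 then |J n| else 0)
            + ∑ m ∈ Finset.Ico 1 n, (J (n - m) + J (n + m)) * |acoef J m i|) * ρ ^ i :=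
          mul_le_mul_of_nonneg_right h1 (pow_nonneg hρ0.le i)
      _ ≤ (if i = 0 then |J n| else 0)
            + ∑ m ∈ Finset.Ico 1 n, (J (n - m) + J (n + m)) * (|acoef J m i| * ρ ^ i) := by
          rw [add_mul, Finset.sum_mul]
          refine add_le_add ?_ (le_of_eq (Finset.sum_congr rfl fun m hm => by ring))
          rcases Nat.eq_zero_or_pos i with h | h
          · simp [h]
          · have hine : ¬ (i = 0) := by omega
            simp [hine]
  have hkey : ∀ k : ℕ, acoef J n (k + 1) * ρ ^ (k + 1)
      = ρ * ∑ j ∈ Finset.range (k + 1), F (k - j) * x ^ j := by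
    intro k
    rw [acoef_eq]
    simp only [Nat.succ_ne_zero, if_false, Nat.add_sub_cancel]
    rw [Finset.sum_mul, Finset.mul_sum]
    refine Finset.sum_congr rfl fun j hj => ?_
    rw [Finset.mem_range] at hj
    have hS : (if k - j = 0 then J n else 0)
        + ∑ m ∈ Finset.Ico 1 n, (J (n - m) + J (n + m)) * acoef J m (k - j) = S (k - j) := rfl
    rw [hS]
    have hx2 : x ^ j = (-(2 * Jbar J - J (2 * n))) ^ j * ρ ^ j := by
      rw [hxdef, hbdef, neg_mul_eq_neg_mul, mul_pow]
    have hρpow : ρ ^ (k + 1) = ρ ^ (k - j) * ρ ^ j * ρ := by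
      rw [show k + 1 = k - j + j + 1 by omega, pow_succ, pow_add]
    rw [hρpow, hx2]
    simp only [hFdef]
    ring
  set H : ℕ → ℝ := fun k => ∑ j ∈ Finset.range (k + 1), F j * x ^ (k - j) with hHdef
  have hrefl : ∀ k, H k = ∑ j ∈ Finset.range (k + 1), F (k - j) * x ^ j := by
    intro k
    simp only [hHdef]
    rw [← Finset.sum_range_reflect (fun j => F j * x ^ (k - j)) (k + 1)]
    refine Finset.sum_congr rfl fun j hj => ?_
    rw [Finset.mem_range] at hj
    rw [Nat.succ_sub_one, Nat.sub_sub_self (by omega : j ≤ k)]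
  have hHnorm : Summable fun k => ‖H k‖ :=
    summable_norm_sum_mul_range_of_summable_norm hFnorm hgs
  have hkey2 : ∀ k, acoef J n (k + 1) * ρ ^ (k + 1) = ρ * H k := by
    intro k; rw [hkey k, hrefl k]
  have hsh : Summable fun k => |acoef J n (k + 1)| * ρ ^ (k + 1) := by
    refine Summable.congr (hHnorm.mul_left ρ) fun k => ?_
    rw [Real.norm_eq_abs]
    have habsmul : ρ * |H k| = |ρ * H k| := by rw [abs_mul, abs_of_nonneg hρ0.le]
    rw [habsmul, ← hkey2 k, abs_mul, abs_pow, abs_of_nonneg hρ0.le]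
  have hsum1 : Summable fun k => |acoef J n k| * ρ ^ k := (summable_nat_add_iff 1).mp hsh
  refine ⟨hsum1, ?_⟩
  have hsum2 : Summable fun k => acoef J n k * ρ ^ k := by
    refine Summable.of_abs (hsum1.congr fun k => ?_)
    rw [abs_mul, abs_pow, abs_of_nonneg hρ0.le]
  have htsum_shift : ∑' k, acoef J n k * ρ ^ k = ∑' k, (ρ * H k) := by
    rw [hsum2.tsum_eq_zero_add]
    simp only [acoef_zero, zero_mul, zero_add]
    exact tsum_congr hkey2
  have hxsum : ∑' j : ℕ, x ^ j = (1 + b * ρ)⁻¹ := by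
    rw [tsum_geometric_of_norm_lt_one (by rwa [Real.norm_eq_abs])]
    congr 1
    rw [hxdef]; ring
  have hsummF : ∀ m ∈ Finset.Ico 1 n,
      Summable fun i => (J (n - m) + J (n + m)) * (acoef J m i * ρ ^ i) := by
    intro m hm
    exact ((habs m hm).of_abs).mul_left _
  have htF : ∑' i, F i = J n + ∑ m ∈ Finset.Ico 1 n, (J (n - m) + J (n + m)) * (q m / q 0) := by
    have hFi : ∀ i, F i = (if i = 0 then J n else 0)
        + ∑ m ∈ Finset.Ico 1 n, (J (n - m) + J (n + m)) * (acoef J m i * ρ ^ i) := by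
      intro i
      simp only [hFdef, hSdef]
      rw [add_mul, Finset.sum_mul]
      congr 1
      · rcases Nat.eq_zero_or_pos i with h | h
        · simp [h]
        · have hine : ¬ (i = 0) := by omega
          simp [hine]
      · exact Finset.sum_congr rfl fun m hm => by ring
    rw [tsum_congr hFi, Summable.tsum_add hind' (summable_sum hsummF), Summable.tsum_finsetSum hsummF]
    congr 1
    · exact tsum_ite_eq 0 (fun _ => J n)
    · exact Finset.sum_congr rfl fun m hm => by rw [tsum_mul_left, (IHm m hm).2]
  have hcauchy : ∑' k, H k = (∑' i, F i) * (∑' j, x ^ j) :=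
    (tsum_mul_tsum_eq_tsum_sum_range_of_summable_norm hFnorm hgs).symm
  have hq0 : 0 < q 0 := by
    rw [hq.1]
    refine Real.sqrt_pos.mpr ?_
    have h2 : 0 ≤ 2 * ε * Jbar J := mul_nonneg (by linarith) hJb0
    linarith
  have hD : 0 < ε * b + w := by
    have := mul_nonneg hε.le hb0; linarith
  have h1bρ : 0 < 1 + b * ρ := by
    have := mul_nonneg hb0 hρ0.le; linarith
  have hrec := hq.2 n hn
  rw [← hbdef] at hrec
  have hqn : q n / q 0
      = ρ * (J n + ∑ m ∈ Finset.Ico 1 n, (J (n - m) + J (n + m)) * (q m / q 0))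
        * (1 + b * ρ)⁻¹ := by
    have hsd : ∑ m ∈ Finset.Ico 1 n, (J (n - m) + J (n + m)) * (q m / q 0)
        = (∑ m ∈ Finset.Ico 1 n, (J (n - m) + J (n + m)) * q m) / q 0 := by
      rw [Finset.sum_div]; exact Finset.sum_congr rfl fun m hm => by ring
    rw [hrec, hsd, hρdef]
    have h1 : q 0 ≠ 0 := ne_of_gt hq0
    have h2 : w ≠ 0 := ne_of_gt hw
    have h3 : ε * b + w ≠ 0 := ne_of_gt hD
    have h4 : 1 + b * (ε / w) ≠ 0 := by
      rw [hρdef] at h1bρ; exact ne_of_gt h1bρ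
    field_simp
    ring
  rw [hqn, htsum_shift, tsum_mul_left, hcauchy, htF, hxsum]
  ring

/-- Power-series expansion of `q_n/q₀` in `ρ = ε/w` for the fDNLS onsite sequence:
`q_n/q₀ = Σ_{k≥1} c_{n,k} ρ^k`, absolutely convergent for `0 < ρ < 1/(2J̄)`, with
leading coefficient `c_{n,1} = J_n`. -/
theorem onsite_power_series (α : ℝ) (hα : 0 < α) (J : ℕ → ℝ) (hJ : IsAlphaKernel α J)
    (n : ℕ) (hn : 1 ≤ n) :
    ∃ c : ℕ → ℝ, c 1 = J n ∧
      ∀ w ε : ℝ, 0 < w → 0 < ε → ε / w < 1 / (2 * Jbar J) →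
        ∀ q : ℕ → ℝ, OnsiteRec J w ε q →
          Summable (fun k : ℕ => |c (k + 1)| * (ε / w) ^ (k + 1)) ∧
          q n / q 0 = ∑' k : ℕ, c (k + 1) * (ε / w) ^ (k + 1) := by
  obtain ⟨hnn, ⟨m₀, hm₀1, hm₀ne⟩, -, hsum⟩ := hJ
  refine ⟨acoef J n, acoef_one J n, ?_⟩
  intro w ε hw hε hρ q hq
  have hρ0 : 0 < ε / w := div_pos hε hw
  have hJm₀ : 0 < J m₀ := (hnn m₀ hm₀1).lt_of_ne (Ne.symm hm₀ne)
  have hJle : J m₀ ≤ Jbar J := by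
    have h := hsum.le_tsum (m₀ - 1) (fun i _ => hnn (i + 1) (Nat.succ_le_succ (Nat.zero_le i)))
    rwa [Nat.sub_add_cancel hm₀1] at h
  have h2J : 0 < 2 * Jbar J := by linarith
  have hρ1 : 2 * Jbar J * (ε / w) < 1 := by
    have h := (lt_div_iff₀ h2J).mp hρ
    calc 2 * Jbar J * (ε / w) = ε / w * (2 * Jbar J) := by ring
      _ < 1 := h
  obtain ⟨hsum1, htsum⟩ := main_onsite J hnn hsum n hn w ε hw hε hρ1 q hq
  have hsum2 : Summable fun k => acoef J n k * (ε / w) ^ k := by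
    refine Summable.of_abs (hsum1.congr fun k => ?_)
    rw [abs_mul, abs_pow, abs_of_nonneg hρ0.le]
  constructor
  · exact (summable_nat_add_iff (f := fun k => |acoef J n k| * (ε / w) ^ k) 1).mpr hsum1
  · rw [htsum, hsum2.tsum_eq_zero_add, acoef_zero, zero_mul, zero_add]
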